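/- Fix integers 1 ≤ k < l, let d = l − k, p = −3/(4d+8), m = 3/2 + 3(k−1)/(4d+8). Define xⱼ = m + j·p for j ≥ 0 and f(x) = |x|/(|x|+|1−x|). Then f(xⱼ) > 3/4 if and only if k ≤ j ≤ l. -/
import Mathlib

lemma fkey (x : ℝ) : |x| / (|x| + |1 - x|) > 3 / 4 ↔ 3/4 < x ∧ x < 3/2 := by
  have h1 : (1:ℝ) ≤ |x| + |1 - x| := by
    have h := abs_add_le x (1 - x)
    simpa using h
  have hd : (0:ℝ) < |x| + |1 - x| := by linarith
  rw [gt_iff_lt, lt_div_iff₀ hd]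
  rcases abs_cases x with ⟨h, h'⟩ | ⟨h, h'⟩ <;>
    rcases abs_cases (1 - x) with ⟨g, g'⟩ | ⟨g, g'⟩ <;>
    rw [h, g] <;>
    constructor <;>
    intro hh
  all_goals first
    | exact ⟨by linarith, by linarith⟩
    | (obtain ⟨ha, hb⟩ := hh; linarith)

theorem interval_recognition (k l : ℕ) (hk : 1 ≤ k) (hkl : k < l) (j : ℕ) :
    let d : ℝ := (l : ℝ) - k
    let p : ℝ := -3 / (4 * d + 8)
    let m : ℝ := 3 / 2 + 3 * ((k : ℝ) - 1) / (4 * d + 8)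
    let x : ℝ := m + j * p
    |x| / (|x| + |1 - x|) > 3 / 4 ↔ (k ≤ j ∧ j ≤ l) := by
  intro d p m x
  have hkl' : (k:ℝ) < l := by exact_mod_cast hkl
  have hD : (0:ℝ) < 4 * d + 8 := by simp only [d]; linarith
  have hx : x = 3/2 + 3 * ((k:ℝ) - 1 - j) / (4 * d + 8) := by
    simp only [x, m, p]
    field_simp
    ring
  rw [fkey, hx]
  constructor
  · rintro ⟨h1, h2⟩
    constructor
    · -- k ≤ j
      have key : 3 * ((k:ℝ) - 1 - j) / (4 * d + 8) < 0 := by linarith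
      rw [div_neg_iff] at key
      have hj : (k:ℝ) - 1 - j < 0 := by
        rcases key with ⟨_, hb⟩ | ⟨ha, _⟩
        · linarith
        · linarith
      have : (k:ℝ) < j + 1 := by linarith
      have : k < j + 1 := by exact_mod_cast this
      omega
    · -- j ≤ l
      have key : -(3/4) < 3 * ((k:ℝ) - 1 - j) / (4 * d + 8) := by linarith
      rw [lt_div_iff₀ hD] at key
      have : (j:ℝ) < l + 1 := by simp only [d] at key; nlinarith
      have : j < l + 1 := by exact_mod_cast this
      omega
  · rintro ⟨h1, h2⟩
    have h1' : (k:ℝ) ≤ j := by exact_mod_cast h1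
    have h2' : (j:ℝ) ≤ l := by exact_mod_cast h2
    constructor
    · have : -(3/4) * (4 * d + 8) < 3 * ((k:ℝ) - 1 - j) := by
        simp only [d]; nlinarith
      have := (lt_div_iff₀ hD).mpr this
      linarith
    · have : 3 * ((k:ℝ) - 1 - j) < 0 := by linarith
      have := (div_lt_iff₀ hD).mpr (by linarith : 3 * ((k:ℝ) - 1 - j) < 0 * (4 * d + 8))
      linarith
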